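/- The Cherednik operator T^k f(x) = f'(x) + 2k (f(x) - f(-x))/(1 - e^{-2x}) - k f(x) applied to the function H(x) = e^x g(-x), where g satisfies T^k g = λ g, yields T^k H = (1 - λ) H. -/

import Mathlib

/-!
For `H(x) = eˣ g(-x)` one has `T^k H (x) = eˣ (g(-x) - T^k g(-x))` for `x ≠ 0`: the derivative of
`H` contributes `eˣ g(-x) - eˣ g'(-x)`, and the two difference-quotient terms combine through
`1 / (1 - e^{-2x}) + 1 / (1 - e^{2x}) = 1`. Hence `T^k g = λ g` gives `T^k H = (1 - λ) H`.
-/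

open Complex Real

/-- At `x = 0` the denominator vanishes and the division returns the junk value `0`. -/
noncomputable def cherednik (k : ℝ) (f : ℝ → ℂ) (x : ℝ) : ℂ :=
  deriv f x + 2 * k * (f x - f (-x)) / (1 - Complex.exp (-2 * x)) - k * f x

lemma exp_ofReal_ne_one {t : ℝ} (ht : t ≠ 0) : Complex.exp t ≠ 1 := by
  rw [← ofReal_exp, ← ofReal_one, Ne, ofReal_inj, Real.exp_eq_one_iff]
  exact ht

lemma hasDerivAt_exp_mul_comp_neg {g : ℝ → ℂ} {x : ℝ} (hg : DifferentiableAt ℝ g (-x)) :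
    HasDerivAt (fun y : ℝ => Complex.exp y * g (-y)) (Complex.exp x * (g (-x) - deriv g (-x)))
      x := by
  have hexp : HasDerivAt (fun y : ℝ => Complex.exp y) (Complex.exp x) x :=
    (hasDerivAt_exp (x : ℂ)).comp_ofReal
  have hrefl : HasDerivAt (fun y : ℝ => g (-y)) (-deriv g (-x)) x := by
    rw [← deriv_comp_neg]
    exact (differentiableAt_comp_neg.2 hg).hasDerivAt
  exact (hexp.mul hrefl).congr_deriv (by ring)

theorem cherednik_exp_mul_comp_neg (k : ℝ) {g : ℝ → ℂ} {x : ℝ} (hx : x ≠ 0)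
    (hg : DifferentiableAt ℝ g (-x)) :
    cherednik k (fun y : ℝ => Complex.exp y * g (-y)) x
      = Complex.exp x * (g (-x) - cherednik k g (-x)) := by
  have hsq : Complex.exp (2 * x) = Complex.exp x ^ 2 := by
    rw [← Complex.exp_nat_mul]; push_cast; rfl
  have hE2 : Complex.exp x ^ 2 ≠ 1 := by
    simpa [hsq] using exp_ofReal_ne_one (mul_ne_zero two_ne_zero hx)
  simp only [cherednik, (hasDerivAt_exp_mul_comp_neg hg).deriv, neg_neg]
  push_cast
  rw [show -2 * -(x : ℂ) = 2 * x by ring, show -2 * (x : ℂ) = -(2 * x) by ring, Complex.exp_neg,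
    Complex.exp_neg, hsq]
  field_simp
  ring

theorem cherednik_reflection_eigen_general (k : ℝ) (g : ℝ → ℂ) (lam : ℂ)
    (hg : Differentiable ℝ g)
    (heig : ∀ x : ℝ, x ≠ 0 →
      deriv g x + 2 * k * (g x - g (-x)) / (1 - Complex.exp (-2 * x)) - k * g x
        = lam * g x) :
    ∀ x : ℝ, x ≠ 0 →
      deriv (fun y : ℝ => Complex.exp y * g (-y)) x
          + 2 * k * ((Complex.exp x * g (-x)) - (Complex.exp (-x) * g x))
              / (1 - Complex.exp (-2 * x))
          - k * (Complex.exp x * g (-x))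
        = (1 - lam) * (Complex.exp x * g (-x)) := by
  intro x hx
  have hTg : cherednik k g (-x) = lam * g (-x) := heig (-x) (neg_ne_zero.2 hx)
  have hTH := cherednik_exp_mul_comp_neg k hx (hg (-x))
  rw [hTg] at hTH
  simp only [cherednik, ofReal_neg, neg_neg] at hTH
  linear_combination hTH

/-- If `T^k g = λ g` where
`T^k f (x) = f'(x) + 2k (f(x)-f(-x))/(1-e^{-2x}) - k f(x)`, then
`H(x) = e^x g(-x)` satisfies `T^k H = (1-λ) H`. -/
theorem cherednik_reflection_eigen (k : ℝ) (hk : 0 ≤ k) (g : ℝ → ℂ) (lam : ℂ)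
    (hg : Differentiable ℝ g)
    (heig : ∀ x : ℝ, x ≠ 0 →
      deriv g x + 2 * k * (g x - g (-x)) / (1 - Complex.exp (-2 * x)) - k * g x
        = lam * g x) :
    ∀ x : ℝ, x ≠ 0 →
      deriv (fun y : ℝ => Complex.exp y * g (-y)) x
          + 2 * k * ((Complex.exp x * g (-x)) - (Complex.exp (-x) * g x))
              / (1 - Complex.exp (-2 * x))
          - k * (Complex.exp x * g (-x))
        = (1 - lam) * (Complex.exp x * g (-x)) :=
  cherednik_reflection_eigen_general k g lam hg heig
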